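/- Given a 3-CNF formula ψ over variables w_1,...,w_n with clauses indexed j = 1,...,m and the algebra A = {0,1,w_1,...,w_n} with operations s_i, t_j, d_1, d_2 as defined in the reduction, if e : {w_1,...,w_n} → {True,False} is a satisfying assignment of ψ and C = {1} ∪ {w_i : e(w_i) = True}, D = A, then (C, D) satisfies: D is closed under all operations; ∅ ≠ C ⊊ D; C ∩ {0} = ∅; D ∩ {0} ≠ ∅; and for every basic operation t of arity r there is an index i such that t(D,...,D,C,D,...,D) ⊆ C with C at the i-th coordinate (i.e., (C, D) is a {0}-blocker). -/
import Mathlib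


/-- The universe `A = {0, 1, w₁, …, wₙ}` of the 3-SAT reduction algebra. -/
inductive Carrier (n : ℕ) : Type where
  | zero : Carrier n
  | one : Carrier n
  | var : Fin n → Carrier n
deriving DecidableEq

open Carrier

/-- The binary operation `sᵢ`: `sᵢ(x,y) = x` if `x = y`, `wᵢ` if `(x,y) = (0,1)`,
and `1` otherwise. -/
def sOp {n : ℕ} (i : Fin n) (x y : Carrier n) : Carrier n :=
  if x = y then x else if x = zero ∧ y = one then var i else one

/-- The ternary operation `tⱼ` associated with a clause `cl` (a literal is a pair of a
variable index and a polarity, `true` meaning a positive literal `w_k`):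
`tⱼ(x,y,z) = x` if `x = y = z`; `= w_k` if the `r`-th literal is `w_k`, the `r`-th
argument is `1` and the other two equal `w_k`; `= 0` if the `r`-th literal is `¬w_k`,
the `r`-th argument is `w_k` and the other two equal `0`; and `= 1` otherwise. -/
noncomputable def tOp {n : ℕ} (cl : Fin 3 → Fin n × Bool) (x y z : Carrier n) :
    Carrier n := by
  classical
  exact
    let v : Fin 3 → Carrier n := ![x, y, z]
    if x = y ∧ y = z then x
    else if h : ∃ r : Fin 3, (cl r).2 = true ∧ v r = one ∧
        ∀ s : Fin 3, s ≠ r → v s = var (cl r).1 then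
      var (cl h.choose).1
    else if ∃ r : Fin 3, (cl r).2 = false ∧ v r = var (cl r).1 ∧
        ∀ s : Fin 3, s ≠ r → v s = zero then
      zero
    else one

/-- `d₁(x,y,z) = x` if `x = y` or `x = z`, else `1`. -/
def dOp1 {n : ℕ} (x y z : Carrier n) : Carrier n :=
  if x = y ∨ x = z then x else one

/-- `d₂(x,y,z) = z` if `y = z` or `x = z`, else `1`. -/
def dOp2 {n : ℕ} (x y z : Carrier n) : Carrier n :=
  if y = z ∨ x = z then z else one

/-- The assignment `e` satisfies the 3-CNF formula `ψ`. -/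
def Satisfies {n m : ℕ} (ψ : Fin m → Fin 3 → Fin n × Bool) (e : Fin n → Bool) : Prop :=
  ∀ j : Fin m, ∃ r : Fin 3, e (ψ j r).1 = (ψ j r).2

/-- `(C, D)` is a `{0}`-blocker of the reduction algebra, in the sense of the
five conditions of Lemma 4.4 (with a per-operation absorbing coordinate). -/
def IsZeroBlocker {n m : ℕ} (ψ : Fin m → Fin 3 → Fin n × Bool)
    (C D : Set (Carrier n)) : Prop :=
  (∀ (i : Fin n) (x y : Carrier n), x ∈ D → y ∈ D → sOp i x y ∈ D) ∧
  (∀ (j : Fin m) (x y z : Carrier n), x ∈ D → y ∈ D → z ∈ D → tOp (ψ j) x y z ∈ D) ∧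
  (∀ x y z : Carrier n, x ∈ D → y ∈ D → z ∈ D → dOp1 x y z ∈ D) ∧
  (∀ x y z : Carrier n, x ∈ D → y ∈ D → z ∈ D → dOp2 x y z ∈ D) ∧
  C.Nonempty ∧ C ⊂ D ∧ (C ∩ {zero} = ∅) ∧ (D ∩ {zero}).Nonempty ∧
  (∀ i : Fin n, ∃ p : Fin 2, ∀ v : Fin 2 → Carrier n,
    (∀ q, v q ∈ D) → v p ∈ C → sOp i (v 0) (v 1) ∈ C) ∧
  (∀ j : Fin m, ∃ p : Fin 3, ∀ v : Fin 3 → Carrier n,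
    (∀ q, v q ∈ D) → v p ∈ C → tOp (ψ j) (v 0) (v 1) (v 2) ∈ C) ∧
  (∃ p : Fin 3, ∀ v : Fin 3 → Carrier n,
    (∀ q, v q ∈ D) → v p ∈ C → dOp1 (v 0) (v 1) (v 2) ∈ C) ∧
  (∃ p : Fin 3, ∀ v : Fin 3 → Carrier n,
    (∀ q, v q ∈ D) → v p ∈ C → dOp2 (v 0) (v 1) (v 2) ∈ C)

section Aux

variable {n : ℕ} (e : Fin n → Bool)

/-- The candidate set `C`. -/
def Cset (e : Fin n → Bool) : Set (Carrier n) :=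
  {one} ∪ {x : Carrier n | ∃ i : Fin n, e i = true ∧ x = var i}

lemma one_mem_C : (one : Carrier n) ∈ Cset e := Or.inl rfl

lemma zero_not_mem_C : (zero : Carrier n) ∉ Cset e := by
  rintro (h | ⟨i, _, h⟩) <;> simp [Cset] at h

lemma var_mem_C_iff (k : Fin n) : (var k : Carrier n) ∈ Cset e ↔ e k = true := by
  constructor
  · rintro (h | ⟨i, hi, h⟩)
    · simp at h
    · cases h; exact hi
  · intro h; exact Or.inr ⟨k, h, rfl⟩

lemma tOp_mem_C {cl : Fin 3 → Fin n × Bool} {r : Fin 3}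
    (hr : e (cl r).1 = (cl r).2) (x y z : Carrier n)
    (hv : (![x, y, z] : Fin 3 → Carrier n) r ∈ Cset e) :
    tOp cl x y z ∈ Cset e := by
  classical
  unfold tOp
  set v : Fin 3 → Carrier n := ![x, y, z] with hvdef
  split
  next h1 =>
    have hx : x = v r := by fin_cases r <;> simp [hvdef, h1.1, h1.2]
    rw [hx]; exact hv
  next =>
    dsimp only
    split
    next h2 =>
      obtain ⟨ht, hone, ho⟩ := h2.choose_spec
      set r' := h2.choose with hr'
      by_cases hrr : r' = r
      · rw [var_mem_C_iff, hrr, hr]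
        rw [hrr] at ht; exact ht
      · have : v r = var (cl r').1 := ho r (fun h => hrr h.symm)
        rw [this] at hv
        rw [var_mem_C_iff] at hv ⊢
        exact hv
    next =>
      split
      next h3 =>
        exfalso
        obtain ⟨r', ht, hvr, ho⟩ := h3
        by_cases hrr : r' = r
        · subst hrr
          rw [hvr, var_mem_C_iff] at hv
          rw [hr, ht] at hv
          exact Bool.false_ne_true hv
        · have : v r = zero := ho r (fun h => hrr h.symm)
          rw [this] at hv
          exact zero_not_mem_C e hv
      next => exact one_mem_C e

end Aux

/-- if `e` is a satisfying assignment of `ψ`, then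
`C = {1} ∪ {wᵢ : e(wᵢ) = True}` and `D = A` form a `{0}`-blocker. -/
theorem stmt17 (n m : ℕ) (ψ : Fin m → Fin 3 → Fin n × Bool) (e : Fin n → Bool)
    (he : Satisfies ψ e) :
    IsZeroBlocker ψ
      ({one} ∪ {x : Carrier n | ∃ i : Fin n, e i = true ∧ x = var i})
      (Set.univ : Set (Carrier n)) := by
  have hC : ({one} ∪ {x : Carrier n | ∃ i : Fin n, e i = true ∧ x = var i}) = Cset e := rfl
  rw [hC]
  refine ⟨fun _ _ _ _ _ => trivial, fun _ _ _ _ _ _ _ => trivial,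
    fun _ _ _ _ _ _ => trivial, fun _ _ _ _ _ _ => trivial,
    ⟨one, one_mem_C e⟩, ⟨Set.subset_univ _, fun h => zero_not_mem_C e (h trivial)⟩,
    ?_, ⟨zero, trivial, rfl⟩, ?_, ?_, ?_, ?_⟩
  · ext x
    simp only [Set.mem_inter_iff, Set.mem_singleton_iff, Set.mem_empty_iff_false,
      iff_false, not_and]
    rintro hx rfl
    exact zero_not_mem_C e hx
  · -- sOp: first coordinate
    intro i
    refine ⟨0, fun v _ hC0 => ?_⟩
    unfold sOp
    split_ifs with h1 h2
    · exact hC0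
    · exact absurd (h2.1 ▸ hC0) (zero_not_mem_C e)
    · exact one_mem_C e
  · -- tOp
    intro j
    obtain ⟨r, hr⟩ := he j
    refine ⟨r, fun v _ hCr => ?_⟩
    refine tOp_mem_C e hr (v 0) (v 1) (v 2) ?_
    have : (![v 0, v 1, v 2] : Fin 3 → Carrier n) r = v r := by
      fin_cases r <;> simp
    rw [this]; exact hCr
  · -- dOp1: first coordinate
    refine ⟨0, fun v _ hC0 => ?_⟩
    unfold dOp1
    split_ifs with h1
    · exact hC0
    · exact one_mem_C e
  · -- dOp2: third coordinate
    refine ⟨2, fun v _ hC2 => ?_⟩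
    unfold dOp2
    split_ifs with h1
    · exact hC2
    · exact one_mem_C e
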